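/- arXiv:1706.09348 — 3 statements merged into one kernel-verified Lean document; each statement's English description precedes it below -/
import Mathlib

section
/- Let Λ be a real vector space with a nondegenerate symmetric bilinear form of signature (3, m), m ≥ 3. If W₁ and W₂ are 3-dimensional positive definite subspaces with W₁ ∩ W₂ = 0, then W₁ + W₂ is 6-dimensional and the form restricted to W₁ + W₂ is nondegenerate of signature (3, 3). -/
/-- A symmetric bilinear form on a real vector space has signature `(p, q)` if the space
admits an orthogonal basis with `p` vectors of positive norm and `q` vectors of negative
norm. -/
def HasSignature {V : Type*} [AddCommGroup V] [Module ℝ V]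
    (B : V →ₗ[ℝ] V →ₗ[ℝ] ℝ) (p q : ℕ) : Prop :=
  ∃ b : Module.Basis (Fin p ⊕ Fin q) ℝ V,
    (∀ i j, i ≠ j → B (b i) (b j) = 0) ∧
    (∀ i, 0 < B (b (Sum.inl i)) (b (Sum.inl i))) ∧
    (∀ j, B (b (Sum.inr j)) (b (Sum.inr j)) < 0)

/-!
Let `U = W₁ ⊔ W₂`, of dimension 6. Since `W₁` is positive definite, its orthogonal complement `C`
in `U` is a complement, of dimension 3. It is negative definite: a nonzero `x ∈ C` with
`B x x ≥ 0` would make `W₁ ⊔ ℝ ∙ x` a 4-dimensional positive semidefinite subspace, but in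
signature `(p, q)` such a subspace meets the span of the negative basis vectors trivially, so
has dimension at most `p = 3`. Orthogonal bases of `W₁` and `C` together exhibit signature
`(3, 3)` on `U`, and a basis with nonzero self-pairings makes the form nondegenerate.
-/

open Module

section OrthogonalBasis

variable {R M ι : Type*} [CommSemiring R] [AddCommMonoid M] [Module R M] [Fintype ι]
  {B : M →ₗ[R] M →ₗ[R] R} {b : Basis ι R M}

theorem LinearMap.IsOrthoᵢ.apply_self_eq_sum (hb : B.IsOrthoᵢ b) (x : M) :
    B x x = ∑ i, b.repr x i * b.repr x i * B (b i) (b i) := by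
  classical
  conv_lhs => rw [← b.sum_repr x]
  simp only [map_sum, LinearMap.sum_apply, map_smul, LinearMap.smul_apply, smul_eq_mul]
  refine Finset.sum_congr rfl fun i _ => ?_
  rw [Finset.sum_eq_single i (fun j _ hji => by rw [hb hji, mul_zero]) (by simp)]
  ring

end OrthogonalBasis

section Signature

variable {V : Type*} [AddCommGroup V] [Module ℝ V] {B : LinearMap.BilinForm ℝ V} {p q : ℕ}

theorem HasSignature.separatingLeft (h : HasSignature B p q) : B.SeparatingLeft := by
  obtain ⟨b, horth, hpos, hneg⟩ := h
  refine LinearMap.IsOrthoᵢ.separatingLeft_of_not_isOrtho_basis_self b horth ?_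
  rintro (i | j)
  exacts [(hpos i).ne', (hneg j).ne]

theorem eq_zero_of_repr_inl_eq_zero_of_nonneg {ι κ : Type*} [Fintype ι] [Fintype κ]
    {b : Basis (ι ⊕ κ) ℝ V} (hb : B.IsOrthoᵢ b) (hneg : ∀ j, B (b (.inr j)) (b (.inr j)) < 0)
    {x : V} (hx : ∀ i, b.repr x (.inl i) = 0) (hxx : 0 ≤ B x x) : x = 0 := by
  set c := b.repr x
  have hterm : ∀ j, c (.inr j) * c (.inr j) * B (b (.inr j)) (b (.inr j)) ≤ 0 :=
    fun j => mul_nonpos_of_nonneg_of_nonpos (mul_self_nonneg _) (hneg j).le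
  have hsum : B x x = ∑ j, c (.inr j) * c (.inr j) * B (b (.inr j)) (b (.inr j)) := by
    rw [hb.apply_self_eq_sum, Fintype.sum_sum_type]
    simp [c, hx]
  have hzero := (Finset.sum_eq_zero_iff_of_nonpos fun j _ => hterm j).mp
    (le_antisymm (Finset.sum_nonpos fun j _ => hterm j) (hsum ▸ hxx))
  have hc : c = 0 := by
    ext (i | j)
    · exact hx i
    · simpa [(hneg j).ne] using hzero j (Finset.mem_univ j)
  simpa [c] using hc

theorem HasSignature.finrank_le_of_nonneg (h : HasSignature B p q) {S : Submodule ℝ V}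
    (hS : ∀ s ∈ S, 0 ≤ B s s) : finrank ℝ S ≤ p := by
  obtain ⟨b, horth, -, hneg⟩ := h
  let f : V →ₗ[ℝ] Fin p → ℝ := LinearMap.funLeft ℝ ℝ Sum.inl ∘ₗ b.equivFun.toLinearMap
  have hf : Function.Injective (f ∘ₗ S.subtype) := by
    rw [← LinearMap.ker_eq_bot, LinearMap.ker_eq_bot']
    intro x hx
    exact Subtype.ext <| eq_zero_of_repr_inl_eq_zero_of_nonneg horth hneg
      (fun i => congrFun hx i) (hS x x.2)
  simpa using LinearMap.finrank_le_finrank_of_injective hf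

theorem HasSignature.apply_self_neg_of_isOrtho [FiniteDimensional ℝ V]
    (hB : B.IsSymm) (h : HasSignature B p q) {W : Submodule ℝ V}
    (hW : finrank ℝ W = p) (hpos : ∀ w ∈ W, w ≠ 0 → 0 < B w w) {x : V} (hx : x ≠ 0)
    (hxW : ∀ w ∈ W, B w x = 0) : B x x < 0 := by
  by_contra! hxx
  have hxW' : x ∉ W := fun hmem => (hpos x hmem hx).ne' (hxW x hmem)
  have hS : ∀ s ∈ W ⊔ ℝ ∙ x, 0 ≤ B s s := by
    intro s hs
    obtain ⟨w, hw, _, hz, rfl⟩ := Submodule.mem_sup.mp hs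
    obtain ⟨t, rfl⟩ := Submodule.mem_span_singleton.mp hz
    have hww : 0 ≤ B w w := by
      rcases eq_or_ne w 0 with rfl | hw0
      exacts [by simp, (hpos w hw hw0).le]
    have hexpand : B (w + t • x) (w + t • x) = B w w + t ^ 2 * B x x := by
      simp [hxW w hw, hB.eq x w]
      ring
    rw [hexpand]
    positivity
  have hdim := h.finrank_le_of_nonneg hS
  rw [Submodule.finrank_sup_span_singleton hxW', hW] at hdim
  omega

theorem isCompl_orthogonal_of_posDef [FiniteDimensional ℝ V] (hB : B.IsSymm)
    {W : Submodule ℝ V} (hpos : ∀ w ∈ W, w ≠ 0 → 0 < B w w) : IsCompl W (B.orthogonal W) := by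
  refine B.isCompl_orthogonal_of_restrict_nondegenerate hB.isRefl
    (B.nondegenerate_restrict_of_disjoint_orthogonal hB.isRefl ?_)
  refine Submodule.disjoint_def.mpr fun w hw hw' => ?_
  by_contra hw0
  exact (hpos w hw hw0).ne' (hw' w hw)

theorem hasSignature_of_isCompl [FiniteDimensional ℝ V] (hB : B.IsSymm)
    {W C : Submodule ℝ V} (hWC : IsCompl W C) (horth : ∀ w ∈ W, ∀ c ∈ C, B w c = 0)
    (hpos : ∀ w ∈ W, w ≠ 0 → 0 < B w w) (hneg : ∀ c ∈ C, c ≠ 0 → B c c < 0) :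
    HasSignature B (finrank ℝ W) (finrank ℝ C) := by
  obtain ⟨v₁, hv₁⟩ := LinearMap.BilinForm.exists_orthogonal_basis
    (B := B.restrict W) ⟨fun x y => hB.eq x y⟩
  obtain ⟨v₂, hv₂⟩ := LinearMap.BilinForm.exists_orthogonal_basis
    (B := B.restrict C) ⟨fun x y => hB.eq x y⟩
  let b := (v₁.prod v₂).map (Submodule.prodEquivOfIsCompl W C hWC)
  have hb_inl : ∀ i, b (.inl i) = v₁ i := by simp [b]
  have hb_inr : ∀ j, b (.inr j) = v₂ j := by simp [b]
  refine ⟨b, ?_, fun i => ?_, fun j => ?_⟩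
  · rintro (i | i) (j | j) hij <;> simp only [hb_inl, hb_inr]
    · exact hv₁ (ne_of_apply_ne Sum.inl hij)
    · exact horth _ (v₁ i).2 _ (v₂ j).2
    · exact (hB.eq _ _).trans (horth _ (v₁ j).2 _ (v₂ i).2)
    · exact hv₂ (ne_of_apply_ne Sum.inr hij)
  · rw [hb_inl]
    exact hpos _ (v₁ i).2 (by simpa using v₁.ne_zero i)
  · rw [hb_inr]
    exact hneg _ (v₂ j).2 (by simpa using v₂.ne_zero j)

theorem HasSignature.restrict_of_le [FiniteDimensional ℝ V] (hB : B.IsSymm)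
    (h : HasSignature B p q) {W U : Submodule ℝ V} (hWU : W ≤ U) (hW : finrank ℝ W = p)
    (hpos : ∀ w ∈ W, w ≠ 0 → 0 < B w w) :
    HasSignature (B.restrict U) p (finrank ℝ U - p) := by
  set B' := B.restrict U
  set W' := W.comap U.subtype
  have hB' : B'.IsSymm := ⟨fun x y => hB.eq x y⟩
  have hW' : finrank ℝ W' = p := by
    rw [(Submodule.comapSubtypeEquivOfLe hWU).finrank_eq, hW]
  have hpos' : ∀ w ∈ W', w ≠ 0 → 0 < B' w w :=
    fun w hw hw0 => hpos w hw (by simpa using hw0)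
  have hcompl := isCompl_orthogonal_of_posDef hB' hpos'
  have hneg : ∀ c ∈ B'.orthogonal W', c ≠ 0 → B' c c < 0 := fun c hc hc0 =>
    h.apply_self_neg_of_isOrtho hB hW hpos (by simpa using hc0) fun w hw => hc ⟨w, hWU hw⟩ hw
  have hdim := Submodule.finrank_add_eq_of_isCompl hcompl
  have hsig := hasSignature_of_isCompl hB' hcompl (fun w hw c hc => hc w hw) hpos' hneg
  rwa [hW', show finrank ℝ (B'.orthogonal W') = finrank ℝ U - p by omega] at hsig

end Signature

theorem stmt3_general {Λ : Type*} [AddCommGroup Λ] [Module ℝ Λ] [FiniteDimensional ℝ Λ]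
    (m : ℕ) (B : Λ →ₗ[ℝ] Λ →ₗ[ℝ] ℝ)
    (hsymm : ∀ x y, B x y = B y x)
    (hsig : HasSignature B 3 m)
    (W₁ W₂ : Submodule ℝ Λ)
    (h1 : Module.finrank ℝ W₁ = 3) (h2 : Module.finrank ℝ W₂ = 3)
    (hpos1 : ∀ w ∈ W₁, w ≠ 0 → 0 < B w w)
    (hint : W₁ ⊓ W₂ = ⊥) :
    Module.finrank ℝ ↥(W₁ ⊔ W₂) = 6 ∧
    (∀ u : ↥(W₁ ⊔ W₂), (∀ u' : ↥(W₁ ⊔ W₂),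
      LinearMap.BilinForm.restrict B (W₁ ⊔ W₂) u u' = 0) → u = 0) ∧
    HasSignature (LinearMap.BilinForm.restrict B (W₁ ⊔ W₂)) 3 3 := by
  have hdim : finrank ℝ ↥(W₁ ⊔ W₂) = 6 := by
    have := Submodule.finrank_sup_add_finrank_inf_eq W₁ W₂
    rw [hint, finrank_bot] at this
    omega
  have hsig' : HasSignature (LinearMap.BilinForm.restrict B (W₁ ⊔ W₂)) 3 (6 - 3) :=
    hdim ▸ hsig.restrict_of_le ⟨hsymm⟩ le_sup_left h1 hpos1
  exact ⟨hdim, hsig'.separatingLeft, hsig'⟩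

/-- If `W₁`, `W₂` are 3-dimensional positive definite subspaces of a real quadratic space of
signature `(3, m)`, `m ≥ 3`, with `W₁ ∩ W₂ = 0`, then `W₁ + W₂` is 6-dimensional and the
restriction of the form to `W₁ + W₂` is nondegenerate of signature `(3, 3)`. -/
theorem stmt3 {Λ : Type*} [AddCommGroup Λ] [Module ℝ Λ] [FiniteDimensional ℝ Λ]
    (m : ℕ) (hm : 3 ≤ m) (B : Λ →ₗ[ℝ] Λ →ₗ[ℝ] ℝ)
    (hsymm : ∀ x y, B x y = B y x)
    (hsig : HasSignature B 3 m)
    (W₁ W₂ : Submodule ℝ Λ)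
    (h1 : Module.finrank ℝ W₁ = 3) (h2 : Module.finrank ℝ W₂ = 3)
    (hpos1 : ∀ w ∈ W₁, w ≠ 0 → 0 < B w w)
    (hpos2 : ∀ w ∈ W₂, w ≠ 0 → 0 < B w w)
    (hint : W₁ ⊓ W₂ = ⊥) :
    Module.finrank ℝ ↥(W₁ ⊔ W₂) = 6 ∧
    (∀ u : ↥(W₁ ⊔ W₂), (∀ u' : ↥(W₁ ⊔ W₂),
      LinearMap.BilinForm.restrict B (W₁ ⊔ W₂) u u' = 0) → u = 0) ∧
    HasSignature (LinearMap.BilinForm.restrict B (W₁ ⊔ W₂)) 3 3 :=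
  stmt3_general m B hsymm hsig W₁ W₂ h1 h2 hpos1 hint
end

section
/- Let q be the quadratic form q(x) = x₀² − x₁² − ⋯ − x_{n}² on ℝ^{n+1} with n ≥ 1. Then the level set {x ∈ ℝ^{n+1} : q(x) = 1} has exactly two path components, distinguished by the sign of x₀. -/
/-!
The upper sheet `{x ∈ S | 0 < x₀}` is the graph of `y ↦ √(1 + ‖y‖²)` over `ℝⁿ`, hence a
continuous image of a path-connected space, and `x ↦ -x` maps it onto the lower sheet. On `S`
we have `x₀² = 1 + ∑ xᵢ² ≥ 1`, so `x₀` never vanishes; by the intermediate value theorem no path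
in `S` can change the sign of `x₀`.
-/

open Set

def hyperboloid (n : ℕ) : Set (Fin (n + 1) → ℝ) :=
  {x | x 0 ^ 2 - ∑ i : Fin n, x i.succ ^ 2 = 1}

namespace hyperboloid

variable {n : ℕ} {x : Fin (n + 1) → ℝ}

theorem mem_iff : x ∈ hyperboloid n ↔ x 0 ^ 2 - ∑ i : Fin n, x i.succ ^ 2 = 1 := Iff.rfl

theorem neg_mem_iff : -x ∈ hyperboloid n ↔ x ∈ hyperboloid n := by
  simp only [mem_iff, Pi.neg_apply, neg_sq]

theorem coord_zero_ne_zero (hx : x ∈ hyperboloid n) : x 0 ≠ 0 := by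
  intro h0
  rw [mem_iff, h0] at hx
  have : 0 ≤ ∑ i : Fin n, x i.succ ^ 2 := Finset.sum_nonneg fun i _ => sq_nonneg _
  nlinarith

noncomputable def lift (y : Fin n → ℝ) : Fin (n + 1) → ℝ :=
  Fin.cons (√(1 + ∑ i, y i ^ 2)) y

theorem continuous_lift : Continuous (lift (n := n)) :=
  continuous_pi <| Fin.cases (by simp only [lift, Fin.cons_zero]; fun_prop)
    fun i => by simpa only [lift, Fin.cons_succ] using continuous_apply i

theorem sep_pos_eq_range_lift : {x ∈ hyperboloid n | 0 < x 0} = range (lift (n := n)) := by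
  ext x
  constructor
  · rintro ⟨hx, hx0⟩
    refine ⟨Fin.tail x, ?_⟩
    have hsum : 1 + ∑ i, Fin.tail x i ^ 2 = x 0 ^ 2 := by
      rw [mem_iff] at hx
      simp only [Fin.tail]
      linarith
    rw [lift, hsum, Real.sqrt_sq hx0.le, Fin.cons_self_tail]
  · rintro ⟨y, rfl⟩
    have hpos : 0 < 1 + ∑ i, y i ^ 2 := by positivity
    refine ⟨?_, Real.sqrt_pos.mpr hpos⟩
    simp only [mem_iff, lift, Fin.cons_zero, Fin.cons_succ, Real.sq_sqrt hpos.le]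
    ring

theorem sep_neg_eq_image_neg :
    {x ∈ hyperboloid n | x 0 < 0} = Neg.neg '' {x ∈ hyperboloid n | 0 < x 0} := by
  ext x
  simp only [image_neg_eq_neg, mem_neg, mem_sep_iff, neg_mem_iff, Pi.neg_apply, neg_pos]

theorem isPathConnected_sep_pos : IsPathConnected {x ∈ hyperboloid n | 0 < x 0} := by
  rw [sep_pos_eq_range_lift]
  exact isPathConnected_range continuous_lift

theorem isPathConnected_sep_neg : IsPathConnected {x ∈ hyperboloid n | x 0 < 0} := by
  rw [sep_neg_eq_image_neg]
  exact isPathConnected_sep_pos.image continuous_neg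

end hyperboloid

theorem not_joinedIn_of_pos_of_neg {X : Type*} [TopologicalSpace X] {S : Set X} {f : X → ℝ}
    (hf : Continuous f) (hS : ∀ x ∈ S, f x ≠ 0) {x y : X} (hx : 0 < f x) (hy : f y < 0) :
    ¬ JoinedIn S x y := by
  rintro ⟨γ, hγ⟩
  have hzero : (0 : ℝ) ∈ Icc (f (γ 1)) (f (γ 0)) := by
    rw [γ.source, γ.target]
    exact ⟨hy.le, hx.le⟩
  obtain ⟨t, ht⟩ := intermediate_value_univ 1 0 (hf.comp γ.continuous) hzero
  exact hS _ (hγ t) ht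

theorem stmt5_general (n : ℕ) :
    ∀ S : Set (Fin (n + 1) → ℝ),
      S = {x | (x 0) ^ 2 - ∑ i : Fin n, (x i.succ) ^ 2 = 1} →
      IsPathConnected {x ∈ S | 0 < x 0} ∧
      IsPathConnected {x ∈ S | x 0 < 0} ∧
      {x ∈ S | 0 < x 0} ∪ {x ∈ S | x 0 < 0} = S ∧
      Disjoint {x ∈ S | 0 < x 0} {x ∈ S | x 0 < 0} ∧
      (∀ x ∈ S, ∀ y ∈ S, 0 < x 0 → y 0 < 0 → ¬ JoinedIn S x y) := by
  rintro S rfl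
  refine ⟨hyperboloid.isPathConnected_sep_pos, hyperboloid.isPathConnected_sep_neg, ?_, ?_,
    fun x _ y _ hx hy => not_joinedIn_of_pos_of_neg (continuous_apply 0)
      (fun _ => hyperboloid.coord_zero_ne_zero) hx hy⟩
  · rw [← sep_or, sep_eq_self_iff_mem_true]
    exact fun x hx => (hyperboloid.coord_zero_ne_zero hx).symm.lt_or_gt
  · exact disjoint_left.mpr fun x hpos hneg => lt_asymm hpos.2 hneg.2

/-- For the quadratic form `q(x) = x₀² − x₁² − ⋯ − xₙ²` on `ℝ^{n+1}` with `n ≥ 1`, the level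
set `S = {q = 1}` (the two-sheeted hyperboloid) has exactly two path components,
distinguished by the sign of `x₀`: the sets `{x ∈ S | x₀ > 0}` and `{x ∈ S | x₀ < 0}` are
each path-connected, they are disjoint, they cover `S`, and no two points lying in distinct
pieces can be joined by a path inside `S`. -/
theorem stmt5 (n : ℕ) (hn : 1 ≤ n) :
    ∀ S : Set (Fin (n + 1) → ℝ),
      S = {x | (x 0) ^ 2 - ∑ i : Fin n, (x i.succ) ^ 2 = 1} →
      IsPathConnected {x ∈ S | 0 < x 0} ∧
      IsPathConnected {x ∈ S | x 0 < 0} ∧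
      {x ∈ S | 0 < x 0} ∪ {x ∈ S | x 0 < 0} = S ∧
      Disjoint {x ∈ S | 0 < x 0} {x ∈ S | x 0 < 0} ∧
      (∀ x ∈ S, ∀ y ∈ S, 0 < x 0 → y 0 < 0 → ¬ JoinedIn S x y) :=
  stmt5_general n
end

section
/- Let Z be a 4-dimensional real vector space with a nondegenerate symmetric bilinear form of signature (3, 1), and let V₁ ⊆ Z be a fixed 2-dimensional positive definite subspace. Then the set of 2-dimensional positive definite subspaces V₃ ⊆ Z with V₁ ∩ V₃ = 0 is path-connected (as a subspace of the Grassmannian of 2-planes in Z). -/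
/-! Let `O = V₁ᗮ`, a complement of `V₁`. It has signature `(1, 1)`: it meets the
`3`-dimensional positive span of the signature basis, and the negative basis vector has a negative
component in it. So `O` has a basis `e, f` with `B e e = 1 = -B f f` and `B e f = 0`. A plane `N`
with `V₁ ⊓ N = ⊥` is the graph `span {e + u, f + v}` of a unique linear map `O → V₁`, and it is
positive definite iff `B(u, v)² < (1 + B(u, u)) (B(v, v) - 1)`. Shrinking `u` to `0` preserves
this inequality, which leaves the set `{v ∈ V₁ | 1 < B(v, v)}`: the outside of an ellipse in the
plane `V₁`, which is path-connected. -/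

open Module Set Submodule
open LinearMap (BilinForm)

theorem binary_quadratic_pos_iff {A D C : ℝ} :
    (∀ a c : ℝ, a ≠ 0 ∨ c ≠ 0 → 0 < A * a ^ 2 + 2 * D * a * c + C * c ^ 2) ↔
      0 < A ∧ D ^ 2 < A * C := by
  constructor
  · intro h
    have hA : 0 < A := by simpa using h 1 0 (by simp)
    have hAC := h (-D) A (Or.inr hA.ne')
    refine ⟨hA, ?_⟩
    nlinarith
  · rintro ⟨hA, hAC⟩ a c hac
    have hC : 0 < C := by nlinarith [sq_nonneg D]
    rcases eq_or_ne c 0 with rfl | hc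
    · have ha : a ≠ 0 := by simpa using hac
      have : 0 < a ^ 2 := by positivity
      nlinarith
    · have : 0 < c ^ 2 := by positivity
      nlinarith [sq_nonneg (A * a + D * c), mul_pos (sub_pos.2 hAC) this]

theorem lt_div_add_one_sq_mul {c m : ℝ} (hc : 0 ≤ c) (hm : 0 < m) : c < (c / m + 1) ^ 2 * m := by
  have h1 : 1 ≤ c / m + 1 := by linarith [div_nonneg hc hm.le]
  calc c < (c / m + 1) * m := by rw [add_mul, div_mul_cancel₀ _ hm.ne']; linarith
    _ ≤ (c / m + 1) ^ 2 * m := by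
      gcongr
      nlinarith

theorem exists_add_mem_of_sup_eq_top {R M : Type*} [Ring R] [AddCommGroup M] [Module R M]
    {V N : Submodule R M} (h : V ⊔ N = ⊤) (x : M) : ∃ u ∈ V, x + u ∈ N := by
  obtain ⟨v, hv, n, hn, hvn⟩ := mem_sup.1 (h ▸ mem_top : x ∈ V ⊔ N)
  exact ⟨-v, V.neg_mem hv, by rwa [← hvn, add_neg_cancel_comm]⟩

theorem linearIndependent_pair_of_notMem_span {K M : Type*} [Field K] [AddCommGroup M]
    [Module K M] {x y : M} (hx : x ≠ 0) (hy : y ∉ span K {x}) :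
    LinearIndependent K ![x, y] :=
  (LinearIndependent.pair_iff' hx).2 fun a ha => hy (mem_span_singleton.2 ⟨a, ha⟩)

section BilinearForm

variable {E : Type*} [AddCommGroup E] [Module ℝ E] {B : E →ₗ[ℝ] E →ₗ[ℝ] ℝ}
  {V : Submodule ℝ E} {e f : E}

def PosDefOn (B : E →ₗ[ℝ] E →ₗ[ℝ] ℝ) (N : Submodule ℝ E) : Prop :=
  ∀ v ∈ N, v ≠ 0 → 0 < B v v

theorem PosDefOn.nonneg {N : Submodule ℝ E} (hN : PosDefOn B N) {v : E} (hv : v ∈ N) :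
    0 ≤ B v v := by
  rcases eq_or_ne v 0 with rfl | h
  · simp
  · exact (hN v hv h).le

theorem apply_smul_add_smul_self (x y : E) (a c : ℝ) :
    B (a • x + c • y) (a • x + c • y) =
      B x x * a ^ 2 + (B x y + B y x) * a * c + B y y * c ^ 2 := by
  simp only [map_add, map_smul, LinearMap.add_apply, LinearMap.smul_apply, smul_eq_mul]
  ring

theorem apply_smul_self (x : E) (a : ℝ) : B (a • x) (a • x) = a ^ 2 * B x x := by
  simp only [map_smul, LinearMap.smul_apply, smul_eq_mul]
  ring

theorem apply_inv_sqrt_smul_self (x : E) {r : ℝ} (hr : 0 ≤ r) :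
    B ((√r)⁻¹ • x) ((√r)⁻¹ • x) = B x x / r := by
  rw [apply_smul_self, inv_pow, Real.sq_sqrt hr, inv_mul_eq_div]

theorem smul_add_smul_ne_zero {x y : E} (hxy : LinearIndependent ℝ ![x, y]) {a c : ℝ}
    (hac : a ≠ 0 ∨ c ≠ 0) : a • x + c • y ≠ 0 := fun h => by
  have := LinearIndependent.pair_iff.1 hxy a c h
  tauto

theorem posDefOn_span_pair_iff (hsymm : ∀ x y, B x y = B y x) {x y : E}
    (hxy : LinearIndependent ℝ ![x, y]) :
    PosDefOn B (span ℝ {x, y}) ↔ 0 < B x x ∧ B x y ^ 2 < B x x * B y y := by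
  have hform : ∀ a c : ℝ, B (a • x + c • y) (a • x + c • y) =
      B x x * a ^ 2 + 2 * B x y * a * c + B y y * c ^ 2 := fun a c => by
    rw [apply_smul_add_smul_self, hsymm y x]
    ring
  rw [← binary_quadratic_pos_iff]
  constructor
  · intro h a c hac
    rw [← hform]
    exact h _ (mem_span_pair.2 ⟨a, c, rfl⟩) (smul_add_smul_ne_zero hxy hac)
  · rintro h z hz hz0
    obtain ⟨a, c, rfl⟩ := mem_span_pair.1 hz
    have hac : a ≠ 0 ∨ c ≠ 0 := by
      by_contra! h0
      simp [h0] at hz0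
    rw [hform]
    exact h a c hac

theorem posDefOn_span_of_pairwise {ι : Type*} [Fintype ι] {v : ι → E}
    (horth : Pairwise fun i j => B (v i) (v j) = 0) (hpos : ∀ i, 0 < B (v i) (v i)) :
    PosDefOn B (span ℝ (range v)) := by
  intro z hz hz0
  obtain ⟨c, rfl⟩ := (mem_span_range_iff_exists_fun ℝ).1 hz
  have hcol : ∀ i, B (v i) (∑ j, c j • v j) = c i * B (v i) (v i) := fun i => by
    simp only [map_sum, map_smul, smul_eq_mul]
    exact Fintype.sum_eq_single i fun j hj => by rw [horth hj.symm, mul_zero]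
  have hdiag : B (∑ i, c i • v i) (∑ j, c j • v j) = ∑ i, c i ^ 2 * B (v i) (v i) := by
    simp only [LinearMap.map_sum₂, LinearMap.map_smul₂, smul_eq_mul, hcol]
    exact Finset.sum_congr rfl fun i _ => by ring
  obtain ⟨i, hi⟩ : ∃ i, c i ≠ 0 := by
    by_contra! h0
    simp [h0] at hz0
  rw [hdiag]
  exact Finset.sum_pos' (fun j _ => mul_nonneg (sq_nonneg _) (hpos j).le)
    ⟨i, Finset.mem_univ i, mul_pos (by positivity) (hpos i)⟩

theorem linearIndependent_pair_of_apply_eq_zero (he : B e e ≠ 0) (hf : B f f ≠ 0)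
    (hef : B e f = 0) : LinearIndependent ℝ ![e, f] := by
  refine LinearIndependent.pair_iff.2 fun a c h => ?_
  have ha : a = 0 := by
    have := congrArg (B e) h
    simp only [map_add, map_smul, smul_eq_mul, hef, map_zero] at this
    simpa [he] using this
  subst ha
  have := congrArg (B f) h
  simp only [zero_smul, zero_add, map_smul, smul_eq_mul, map_zero] at this
  exact ⟨rfl, by simpa [hf] using this⟩

theorem exists_pos_mem_of_finrank_lt [FiniteDimensional ℝ E] {P W : Submodule ℝ E}
    (hP : PosDefOn B P) (h : finrank ℝ E < finrank ℝ P + finrank ℝ W) :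
    ∃ y ∈ W, 0 < B y y := by
  have hPW : ¬Disjoint P W := fun hd => (finrank_add_finrank_le_of_disjoint hd).not_gt h
  obtain ⟨y, hy, hy0⟩ := exists_mem_ne_zero_of_ne_bot (disjoint_iff.not.1 hPW)
  exact ⟨y, (mem_inf.1 hy).2, hP y (mem_inf.1 hy).1 hy0⟩

theorem apply_add_add_of_mem_orthogonal (hsymm : ∀ x y, B x y = B y x) {x y u v : E}
    (hx : x ∈ BilinForm.orthogonal B V) (hy : y ∈ BilinForm.orthogonal B V)
    (hu : u ∈ V) (hv : v ∈ V) : B (x + u) (y + v) = B x y + B u v := by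
  have hxv : B x v = 0 := by rw [hsymm]; exact hx v hv
  have huy : B u y = 0 := hy u hu
  simp only [map_add, LinearMap.add_apply, hxv, huy]
  ring

theorem isCompl_orthogonal_of_posDefOn [FiniteDimensional ℝ E] (hsymm : ∀ x y, B x y = B y x)
    (hV : PosDefOn B V) : IsCompl V (BilinForm.orthogonal B V) := by
  have hrefl : BilinForm.IsRefl B := fun x y h => by rw [hsymm]; exact h
  refine BilinForm.isCompl_orthogonal_of_restrict_nondegenerate hrefl
    (BilinForm.nondegenerate_restrict_of_disjoint_orthogonal B hrefl ?_)
  refine disjoint_def.2 fun x hx hxo => ?_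
  by_contra hx0
  exact (hV x hx hx0).ne' (hxo x hx)

theorem exists_neg_mem_orthogonal (hsymm : ∀ x y, B x y = B y x) (hV : PosDefOn B V)
    (hsup : V ⊔ BilinForm.orthogonal B V = ⊤) {z : E} (hz : B z z < 0) :
    ∃ y ∈ BilinForm.orthogonal B V, B y y < 0 := by
  obtain ⟨v, hv, y, hy, rfl⟩ := mem_sup.1 (hsup ▸ mem_top : z ∈ V ⊔ BilinForm.orthogonal B V)
  refine ⟨y, hy, ?_⟩
  rw [add_comm, apply_add_add_of_mem_orthogonal hsymm hy hy hv hv] at hz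
  linarith [hV.nonneg hv]

theorem exists_orthonormal_pair (hsymm : ∀ x y, B x y = B y x) {W : Submodule ℝ E} {x y : E}
    (hx : x ∈ W) (hxx : 0 < B x x) (hy : y ∈ W) (hyy : B y y < 0) :
    ∃ e ∈ W, ∃ f ∈ W, B e e = 1 ∧ B f f = -1 ∧ B e f = 0 := by
  -- Gram–Schmidt: `x'` is orthogonal to `y`, and `B x' x' ≥ B x x` because `B y y < 0`.
  set x' := x - (B x y / B y y) • y
  have hyy0 : B y y ≠ 0 := hyy.ne
  have hx'y : B x' y = 0 := by
    simp only [x', map_sub, map_smul, LinearMap.sub_apply, LinearMap.smul_apply, smul_eq_mul]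
    field_simp
    ring
  have hx'x' : 0 < B x' x' := by
    have : B x' x' = B x x - B x y ^ 2 / B y y := by
      simp only [x', map_sub, map_smul, LinearMap.sub_apply, LinearMap.smul_apply, smul_eq_mul,
        hsymm y x]
      field_simp
      ring
    rw [this]
    have : B x y ^ 2 / B y y ≤ 0 := div_nonpos_of_nonneg_of_nonpos (sq_nonneg _) hyy.le
    linarith
  refine ⟨(√(B x' x'))⁻¹ • x', W.smul_mem _ (W.sub_mem hx (W.smul_mem _ hy)),
    (√(-B y y))⁻¹ • y, W.smul_mem _ hy, ?_, ?_, ?_⟩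
  · rw [apply_inv_sqrt_smul_self _ hx'x'.le, div_self hx'x'.ne']
  · rw [apply_inv_sqrt_smul_self _ (by linarith), div_neg, div_self hyy.ne]
  · simp [hx'y]

variable {p q : ℕ}

theorem HasSignature.finrank_eq (h : HasSignature B p q) : finrank ℝ E = p + q := by
  obtain ⟨b, -⟩ := h
  simp [finrank_eq_card_basis b]

theorem HasSignature.exists_posDefOn (h : HasSignature B p q) :
    ∃ P : Submodule ℝ E, finrank ℝ P = p ∧ PosDefOn B P := by
  obtain ⟨b, horth, hpos, -⟩ := h
  refine ⟨span ℝ (range (b ∘ Sum.inl)), ?_, posDefOn_span_of_pairwise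
    (fun i j hij => horth _ _ (Sum.inl_injective.ne hij)) hpos⟩
  simp [finrank_span_eq_card (b.linearIndependent.comp Sum.inl Sum.inl_injective)]

theorem HasSignature.exists_neg (h : HasSignature B p (q + 1)) : ∃ z, B z z < 0 := by
  obtain ⟨b, -, -, hneg⟩ := h
  exact ⟨_, hneg 0⟩

structure IsOrthonormalComplement (B : E →ₗ[ℝ] E →ₗ[ℝ] ℝ) (V : Submodule ℝ E) (e f : E) :
    Prop where
  isCompl : IsCompl V (span ℝ {e, f})
  span_le_orthogonal : span ℝ {e, f} ≤ BilinForm.orthogonal B V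
  apply_e_e : B e e = 1
  apply_f_f : B f f = -1
  apply_e_f : B e f = 0

theorem exists_isOrthonormalComplement [FiniteDimensional ℝ E] {n : ℕ}
    (hsymm : ∀ x y, B x y = B y x) (hsig : HasSignature B (n + 1) 1) (hV : PosDefOn B V)
    (hVn : finrank ℝ V = n) : ∃ e f, IsOrthonormalComplement B V e f := by
  set O := BilinForm.orthogonal B V
  have hVO : IsCompl V O := isCompl_orthogonal_of_posDefOn hsymm hV
  have hO : finrank ℝ O = 2 := by
    have := finrank_add_eq_of_isCompl hVO
    rw [hsig.finrank_eq, hVn] at this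
    omega
  obtain ⟨x, hxO, hx⟩ : ∃ x ∈ O, 0 < B x x := by
    obtain ⟨P, hPdim, hP⟩ := hsig.exists_posDefOn
    exact exists_pos_mem_of_finrank_lt hP (by rw [hsig.finrank_eq, hPdim, hO]; omega)
  obtain ⟨z, hz⟩ := hsig.exists_neg
  obtain ⟨y, hyO, hy⟩ := exists_neg_mem_orthogonal hsymm hV hVO.sup_eq_top hz
  obtain ⟨e, he, f, hf, hee, hff, hef⟩ := exists_orthonormal_pair hsymm hxO hx hyO hy
  have hspan : span ℝ {e, f} = O := by
    have hli := linearIndependent_pair_of_apply_eq_zero (by simp [hee]) (by simp [hff]) hef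
    refine eq_of_le_of_finrank_eq (span_le.2 (insert_subset he (singleton_subset_iff.2 hf))) ?_
    rw [hO, ← Matrix.range_cons_cons_empty, finrank_span_eq_card hli, Fintype.card_fin]
  exact ⟨e, f, hspan ▸ hVO, hspan.le, hee, hff, hef⟩

namespace IsOrthonormalComplement

variable {u v : E}

theorem linearIndependent (h : IsOrthonormalComplement B V e f) :
    LinearIndependent ℝ ![e, f] :=
  linearIndependent_pair_of_apply_eq_zero (by simp [h.apply_e_e]) (by simp [h.apply_f_f])
    h.apply_e_f

theorem projection_comp_add (h : IsOrthonormalComplement B V e f) (hu : u ∈ V) (hv : v ∈ V) :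
    (span ℝ {e, f}).projection V h.isCompl.symm ∘ ![e + u, f + v] = ![e, f] := by
  have hproj : ∀ x ∈ span ℝ {e, f}, ∀ w ∈ V,
      (span ℝ {e, f}).projection V h.isCompl.symm (x + w) = x := fun x hx w hw => by
    rw [map_add, projection_apply_of_mem_left _ hx, projection_apply_of_mem_right _ hw, add_zero]
  ext i
  fin_cases i
  · exact hproj e (subset_span (mem_insert e {f})) u hu
  · exact hproj f (subset_span (mem_insert_of_mem e rfl)) v hv

theorem linearIndependent_add (h : IsOrthonormalComplement B V e f) (hu : u ∈ V) (hv : v ∈ V) :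
    LinearIndependent ℝ ![e + u, f + v] :=
  .of_comp _ (h.projection_comp_add hu hv ▸ h.linearIndependent)

theorem inf_span_add_eq_bot (h : IsOrthonormalComplement B V e f) (hu : u ∈ V) (hv : v ∈ V) :
    V ⊓ span ℝ (range ![e + u, f + v]) = ⊥ := by
  have := range_ker_disjoint (h.projection_comp_add hu hv ▸ h.linearIndependent)
  rw [ker_projection] at this
  exact this.symm.eq_bot

theorem posDefOn_span_add_iff (h : IsOrthonormalComplement B V e f)
    (hsymm : ∀ x y, B x y = B y x) (hV : PosDefOn B V) (hu : u ∈ V) (hv : v ∈ V) :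
    PosDefOn B (span ℝ (range ![e + u, f + v])) ↔ B u v ^ 2 < (1 + B u u) * (B v v - 1) := by
  have he := h.span_le_orthogonal (subset_span (mem_insert e {f}))
  have hf := h.span_le_orthogonal (subset_span (mem_insert_of_mem e rfl))
  rw [Matrix.range_cons_cons_empty, posDefOn_span_pair_iff hsymm (h.linearIndependent_add hu hv),
    apply_add_add_of_mem_orthogonal hsymm he he hu hu,
    apply_add_add_of_mem_orthogonal hsymm he hf hu hv,
    apply_add_add_of_mem_orthogonal hsymm hf hf hv hv, h.apply_e_e, h.apply_e_f, h.apply_f_f,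
    zero_add, ← sub_eq_neg_add]
  exact and_iff_right (by linarith [hV.nonneg hu])

theorem exists_span_add_eq [FiniteDimensional ℝ E] (h : IsOrthonormalComplement B V e f)
    {N : Submodule ℝ E} (hN : finrank ℝ N = 2) (hVN : V ⊓ N = ⊥) :
    ∃ u ∈ V, ∃ v ∈ V, span ℝ (range ![e + u, f + v]) = N := by
  have hdim : finrank ℝ E = finrank ℝ V + finrank ℝ N := by
    rw [← finrank_add_eq_of_isCompl h.isCompl, hN, ← Matrix.range_cons_cons_empty,
      finrank_span_eq_card h.linearIndependent, Fintype.card_fin]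
  have hsup := eq_top_of_disjoint V N hdim.le (disjoint_iff.2 hVN)
  obtain ⟨u, hu, heu⟩ := exists_add_mem_of_sup_eq_top hsup e
  obtain ⟨v, hv, hfv⟩ := exists_add_mem_of_sup_eq_top hsup f
  refine ⟨u, hu, v, hv, eq_of_le_of_finrank_eq ?_ ?_⟩
  · rw [span_le, Matrix.range_cons_cons_empty]
    exact insert_subset heu (singleton_subset_iff.2 hfv)
  · rw [hN, finrank_span_eq_card (h.linearIndependent_add hu hv), Fintype.card_fin]

end IsOrthonormalComplement

end BilinearForm

section PathConnected

variable {E : Type*} [AddCommGroup E] [Module ℝ E] {B : E →ₗ[ℝ] E →ₗ[ℝ] ℝ} {V : Submodule ℝ E}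
  {c : ℝ}

/-- The pairs `(u, v) = (φ e, φ f)` of the linear maps `φ : span {e, f} → V` whose graph
`span {e + u, f + v}` is positive definite (`IsOrthonormalComplement.posDefOn_span_add_iff`). -/
def posGraphSet (B : E →ₗ[ℝ] E →ₗ[ℝ] ℝ) (V : Submodule ℝ E) : Set (E × E) :=
  {p | p.1 ∈ V ∧ p.2 ∈ V ∧ B p.1 p.2 ^ 2 < (1 + B p.1 p.1) * (B p.2 p.2 - 1)}

theorem PosDefOn.one_lt_of_mem_posGraphSet (hV : PosDefOn B V) {p : E × E}
    (hp : p ∈ posGraphSet B V) : 1 < B p.2 p.2 := by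
  obtain ⟨hu, -, hD⟩ := hp
  nlinarith [sq_nonneg (B p.1 p.2), hV.nonneg hu]

variable [TopologicalSpace E] [ContinuousAdd E] [ContinuousSMul ℝ E]

theorem joinedIn_smul_of_one_le (hc : 0 ≤ c) {v : E} (hv : v ∈ {x | x ∈ V ∧ c < B x x})
    {R : ℝ} (hR : 1 ≤ R) : JoinedIn {x | x ∈ V ∧ c < B x x} v (R • v) := by
  refine .of_segment_subset ?_
  rw [segment_eq_image]
  rintro _ ⟨s, ⟨hs0, hs1⟩, rfl⟩
  have hk : 1 ≤ 1 + s * (R - 1) := by nlinarith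
  dsimp only
  rw [show (1 - s) • v + s • R • v = (1 + s * (R - 1)) • v by module]
  refine ⟨V.smul_mem _ hv.1, ?_⟩
  rw [apply_smul_self]
  nlinarith [hv.2, one_le_pow₀ hk (n := 2)]

theorem joinedIn_of_linearIndependent (hV : PosDefOn B V) (hc : 0 ≤ c) {v w : E}
    (hv : v ∈ {x | x ∈ V ∧ c < B x x}) (hw : w ∈ {x | x ∈ V ∧ c < B x x})
    (hvw : LinearIndependent ℝ ![v, w]) : JoinedIn {x | x ∈ V ∧ c < B x x} v w := by
  have hmem : ∀ s : ℝ, (1 - s) • v + s • w ∈ V := fun s => V.add_mem (V.smul_mem _ hv.1)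
    (V.smul_mem _ hw.1)
  set g : ℝ → ℝ := fun s => B ((1 - s) • v + s • w) ((1 - s) • v + s • w)
  have hg : Continuous g := by
    simp only [g, apply_smul_add_smul_self]
    fun_prop
  obtain ⟨s₀, -, hmin⟩ :=
    isCompact_Icc.exists_isMinOn (nonempty_Icc.2 zero_le_one) hg.continuousOn
  have hm : 0 < g s₀ := hV _ (hmem s₀) (smul_add_smul_ne_zero hvw (by
    by_contra! h
    linarith [h.1, h.2]))
  -- Scaling by `R` pushes the whole segment from `v` to `w` above level `c`.
  set R := c / g s₀ + 1
  have hR : 1 ≤ R := by linarith [div_nonneg hc hm.le]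
  have hseg : segment ℝ (R • v) (R • w) ⊆ {x | x ∈ V ∧ c < B x x} := by
    rw [segment_eq_image]
    rintro _ ⟨s, hs, rfl⟩
    dsimp only
    rw [show (1 - s) • R • v + s • R • w = R • ((1 - s) • v + s • w) by module]
    refine ⟨V.smul_mem _ (hmem s), ?_⟩
    rw [apply_smul_self]
    calc c < R ^ 2 * g s₀ := lt_div_add_one_sq_mul hc hm
      _ ≤ R ^ 2 * g s := by gcongr; exact hmin hs
  exact ((joinedIn_smul_of_one_le hc hv hR).trans (.of_segment_subset hseg)).trans
    (joinedIn_smul_of_one_le hc hw hR).symm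

theorem isPathConnected_setOf_lt_apply_self (hV : PosDefOn B V) (hV2 : 2 ≤ finrank ℝ V)
    (hc : 0 ≤ c) : IsPathConnected {x | x ∈ V ∧ c < B x x} := by
  have hne : ∀ x ∈ {x | x ∈ V ∧ c < B x x}, x ≠ 0 := by
    rintro x ⟨-, hx⟩ rfl
    simp only [map_zero] at hx
    linarith
  have hscale : ∀ x ∈ V, x ≠ 0 → ∃ R : ℝ, R ≠ 0 ∧ R • x ∈ {x | x ∈ V ∧ c < B x x} := by
    intro x hx hx0
    have hxx := hV x hx hx0
    refine ⟨c / B x x + 1, by positivity, V.smul_mem _ hx, ?_⟩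
    rw [apply_smul_self]
    exact lt_div_add_one_sq_mul hc hxx
  have hoff : ∀ x, ∃ W ∈ V, W ∉ span ℝ {x} := by
    intro x
    refine SetLike.not_le_iff_exists.1 fun hle => ?_
    have := (finrank_mono hle).trans (finrank_span_le_card ({x} : Set E))
    simp only [toFinset_singleton, Finset.card_singleton] at this
    omega
  refine isPathConnected_iff.2 ⟨?_, fun x hx y hy => ?_⟩
  · obtain ⟨W, hW, hW0⟩ := hoff 0
    obtain ⟨R, -, hR⟩ := hscale W hW (by simpa using hW0)
    exact ⟨_, hR⟩
  by_cases hxy : LinearIndependent ℝ ![x, y]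
  · exact joinedIn_of_linearIndependent hV hc hx hy hxy
  -- `x` and `y` are collinear: go through a point of the set off their common line.
  have hyx : span ℝ {y} ≤ span ℝ {x} := by
    by_contra h
    exact hxy (linearIndependent_pair_of_notMem_span (hne x hx)
      (fun hy' => h ((span_singleton_le_iff_mem _ _).2 hy')))
  obtain ⟨W, hW, hWx⟩ := hoff x
  obtain ⟨R, hR0, hRW⟩ := hscale W hW (by rintro rfl; exact hWx (zero_mem _))
  have hRWx : R • W ∉ span ℝ {x} := fun h => hWx (by simpa [hR0] using smul_mem _ R⁻¹ h)
  refine (joinedIn_of_linearIndependent hV hc hx hRW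
    (linearIndependent_pair_of_notMem_span (hne x hx) hRWx)).trans
    (joinedIn_of_linearIndependent hV hc hRW hy ?_)
  rw [LinearIndependent.pair_symm_iff]
  exact linearIndependent_pair_of_notMem_span (hne y hy) fun h => hRWx (hyx h)

theorem joinedIn_posGraphSet_zero (hV : PosDefOn B V) {p : E × E} (hp : p ∈ posGraphSet B V) :
    JoinedIn (posGraphSet B V) p (0, p.2) := by
  have hQ := sub_pos.2 (hV.one_lt_of_mem_posGraphSet hp)
  obtain ⟨u, v⟩ := p
  obtain ⟨hu, hv, hD⟩ := hp
  refine .of_segment_subset ?_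
  rw [segment_eq_image]
  rintro _ ⟨s, ⟨hs0, hs1⟩, rfl⟩
  have hpt : (1 - s) • (u, v) + s • ((0 : E), v) = ((1 - s) • u, v) :=
    Prod.ext (by simp) (by simp only [Prod.snd_add, Prod.smul_snd]; module)
  simp only [hpt]
  refine ⟨V.smul_mem _ hu, hv, ?_⟩
  simp only [map_smul, LinearMap.smul_apply, smul_eq_mul]
  have ht0 : 0 ≤ 1 - s := by linarith
  have ht1 : 1 - s ≤ 1 := by linarith
  nlinarith [mul_nonneg (mul_nonneg ht0 ht0) (sub_pos.2 hD).le,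
    mul_nonneg (sub_nonneg.2 ht1) hQ.le, mul_nonneg (sub_nonneg.2 ht1) ht0, hV.nonneg hu]

theorem isPathConnected_posGraphSet (hV : PosDefOn B V) (hV2 : 2 ≤ finrank ℝ V) :
    IsPathConnected (posGraphSet B V) := by
  have hT := (isPathConnected_setOf_lt_apply_self hV hV2 zero_le_one).image
    (f := fun v : E => ((0 : E), v)) (by fun_prop)
  have hsub : (fun v : E => ((0 : E), v)) '' {x | x ∈ V ∧ 1 < B x x} ⊆ posGraphSet B V := by
    rintro _ ⟨v, ⟨hv, hvv⟩, rfl⟩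
    exact ⟨V.zero_mem, hv, by simpa using hvv⟩
  have hmemT : ∀ p ∈ posGraphSet B V, ((0 : E), p.2) ∈ (fun v : E => ((0 : E), v)) ''
      {x | x ∈ V ∧ 1 < B x x} := fun p hp => ⟨p.2, ⟨hp.2.1, hV.one_lt_of_mem_posGraphSet hp⟩, rfl⟩
  refine isPathConnected_iff.2 ⟨hT.nonempty.mono hsub, fun p hp q hq => ?_⟩
  exact ((joinedIn_posGraphSet_zero hV hp).trans ((hT.joinedIn _ (hmemT p hp) _
    (hmemT q hq)).mono hsub)).trans (joinedIn_posGraphSet_zero hV hq).symm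

end PathConnected

theorem stmt11_general {Z : Type*} [AddCommGroup Z] [Module ℝ Z] [FiniteDimensional ℝ Z]
    [TopologicalSpace Z] [IsTopologicalAddGroup Z] [ContinuousSMul ℝ Z]
    (B : Z →ₗ[ℝ] Z →ₗ[ℝ] ℝ)
    (hsymm : ∀ x y, B x y = B y x)
    (hsig : HasSignature B 3 1)
    (V₁ : Submodule ℝ Z)
    (hV₁ : Module.finrank ℝ V₁ = 2)
    (hV₁pos : ∀ v ∈ V₁, v ≠ 0 → 0 < B v v)
    (N₀ N₁ : Submodule ℝ Z)
    (hN₀ : Module.finrank ℝ N₀ = 2 ∧ (∀ v ∈ N₀, v ≠ 0 → 0 < B v v) ∧ V₁ ⊓ N₀ = ⊥)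
    (hN₁ : Module.finrank ℝ N₁ = 2 ∧ (∀ v ∈ N₁, v ≠ 0 → 0 < B v v) ∧ V₁ ⊓ N₁ = ⊥) :
    ∃ γ : ℝ → Fin 2 → Z, Continuous γ ∧
      (∀ t ∈ Set.Icc (0 : ℝ) 1, LinearIndependent ℝ (γ t) ∧
        (∀ v ∈ Submodule.span ℝ (Set.range (γ t)), v ≠ 0 → 0 < B v v) ∧
        V₁ ⊓ Submodule.span ℝ (Set.range (γ t)) = ⊥) ∧
      Submodule.span ℝ (Set.range (γ 0)) = N₀ ∧
      Submodule.span ℝ (Set.range (γ 1)) = N₁ := by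
  obtain ⟨e, f, h⟩ := exists_isOrthonormalComplement hsymm hsig hV₁pos hV₁
  obtain ⟨u₀, hu₀, v₀, hv₀, rfl⟩ := h.exists_span_add_eq hN₀.1 hN₀.2.2
  obtain ⟨u₁, hu₁, v₁, hv₁, rfl⟩ := h.exists_span_add_eq hN₁.1 hN₁.2.2
  have hS₀ : (u₀, v₀) ∈ posGraphSet B V₁ :=
    ⟨hu₀, hv₀, (h.posDefOn_span_add_iff hsymm hV₁pos hu₀ hv₀).1 hN₀.2.1⟩
  have hS₁ : (u₁, v₁) ∈ posGraphSet B V₁ :=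
    ⟨hu₁, hv₁, (h.posDefOn_span_add_iff hsymm hV₁pos hu₁ hv₁).1 hN₁.2.1⟩
  obtain ⟨γ, hγ⟩ := (isPathConnected_posGraphSet hV₁pos hV₁.ge).joinedIn _ hS₀ _ hS₁
  refine ⟨fun t => ![e + (γ.extend t).1, f + (γ.extend t).2], by fun_prop, fun t _ => ?_,
    by simp, by simp⟩
  obtain ⟨hu, hv, hpos⟩ := hγ (projIcc 0 1 zero_le_one t)
  exact ⟨h.linearIndependent_add hu hv, (h.posDefOn_span_add_iff hsymm hV₁pos hu hv).2 hpos,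
    h.inf_span_add_eq_bot hu hv⟩

/-- Let `Z` be a 4-dimensional real quadratic space of signature `(3, 1)` (with its canonical
Hausdorff vector-space topology) and `V₁ ⊆ Z` a fixed 2-dimensional positive definite
subspace.  The set of 2-dimensional positive definite subspaces `V₃ ⊆ Z` with
`V₁ ∩ V₃ = 0` is path-connected in the Grassmannian of 2-planes: any two such subspaces
`N₀, N₁` are joined by a path in the Grassmannian staying in this set.  Since `[0,1]` is
contractible, such a path lifts to a continuous family of frames; the statement is phrased
via this equivalent frame formulation. -/
theorem stmt11 {Z : Type*} [AddCommGroup Z] [Module ℝ Z] [FiniteDimensional ℝ Z]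
    [TopologicalSpace Z] [IsTopologicalAddGroup Z] [ContinuousSMul ℝ Z] [T2Space Z]
    (hdim : Module.finrank ℝ Z = 4)
    (B : Z →ₗ[ℝ] Z →ₗ[ℝ] ℝ)
    (hsymm : ∀ x y, B x y = B y x)
    (hsig : HasSignature B 3 1)
    (V₁ : Submodule ℝ Z)
    (hV₁ : Module.finrank ℝ V₁ = 2)
    (hV₁pos : ∀ v ∈ V₁, v ≠ 0 → 0 < B v v)
    (N₀ N₁ : Submodule ℝ Z)
    (hN₀ : Module.finrank ℝ N₀ = 2 ∧ (∀ v ∈ N₀, v ≠ 0 → 0 < B v v) ∧ V₁ ⊓ N₀ = ⊥)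
    (hN₁ : Module.finrank ℝ N₁ = 2 ∧ (∀ v ∈ N₁, v ≠ 0 → 0 < B v v) ∧ V₁ ⊓ N₁ = ⊥) :
    ∃ γ : ℝ → Fin 2 → Z, Continuous γ ∧
      (∀ t ∈ Set.Icc (0 : ℝ) 1, LinearIndependent ℝ (γ t) ∧
        (∀ v ∈ Submodule.span ℝ (Set.range (γ t)), v ≠ 0 → 0 < B v v) ∧
        V₁ ⊓ Submodule.span ℝ (Set.range (γ t)) = ⊥) ∧
      Submodule.span ℝ (Set.range (γ 0)) = N₀ ∧
      Submodule.span ℝ (Set.range (γ 1)) = N₁ :=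
  stmt11_general B hsymm hsig V₁ hV₁ hV₁pos N₀ N₁ hN₀ hN₁
end
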